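/- arXiv:1803.06965 — 2 statements merged into one kernel-verified Lean document; each statement's English description precedes it below -/
import Mathlib

section
/- Let G be a group and g, h ∈ G. If n ≥ 1 is an integer such that [g,h]^n commutes with h, then [g,h]^{n+1} = [g, h²] · [h g h⁻¹, h]^{n-1}, where [x,y] = x y x⁻¹ y⁻¹ denotes the commutator. (The commutator-power reduction identity, equation (1) of the paper, used in the proof of the generalized Schur theorem.) -/
open scoped commutatorElement

/-- Commutator-power reduction identity (equation (1) of the paper): if `n ≥ 1`
and `⁅g, h⁆ ^ n` commutes with `h`, then
`⁅g, h⁆ ^ (n + 1) = ⁅g, h ^ 2⁆ * ⁅h * g * h⁻¹, h⁆ ^ (n - 1)`. -/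
theorem commutator_pow_succ_eq (G : Type*) [Group G] (g h : G) (n : ℕ) (hn : 1 ≤ n)
    (hcomm : h * ⁅g, h⁆ ^ n = ⁅g, h⁆ ^ n * h) :
    ⁅g, h⁆ ^ (n + 1) = ⁅g, h ^ 2⁆ * ⁅h * g * h⁻¹, h⁆ ^ (n - 1) := by
  obtain ⟨m, rfl⟩ : ∃ m, n = m + 1 := ⟨n - 1, by omega⟩
  have hc : ⁅h * g * h⁻¹, h⁆ = h * ⁅g, h⁆ * h⁻¹ := by group
  have h2 : ⁅g, h ^ 2⁆ = ⁅g, h⁆ * (h * ⁅g, h⁆ * h⁻¹) := by rw [pow_two]; group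
  rw [hc, conj_pow, h2, Nat.add_sub_cancel]
  have step : ⁅g, h⁆ * (h * ⁅g, h⁆ * h⁻¹) * (h * ⁅g, h⁆ ^ m * h⁻¹)
      = ⁅g, h⁆ * (h * ⁅g, h⁆ ^ (m + 1)) * h⁻¹ := by
    rw [pow_succ']; simp [mul_assoc]
  rw [step, hcomm]
  group
end

section
/- Let G be a group and H a subgroup of G such that the centralizer C_G(H) has finite index in G. Then there exists a natural number N such that every element of the commutator subgroup (G,H) can be written as a product of at most N commutators of the form [g, c h c⁻¹] with g, c ∈ G and h ∈ H. (In the paper, if the normal core of C_G(H) has index n in G, one may take N = n⁴.) -/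
open scoped commutatorElement

namespace CommBoundAux

variable {G : Type*} [Group G]

/-- evaluation of a commutator datum `(g, c, h) ↦ ⁅g, c h c⁻¹⁆`. -/
def ev (d : G × G × G) : G := ⁅d.1, d.2.1 * d.2.2 * d.2.1⁻¹⁆

/-- the class of a datum modulo a subgroup `K`. -/
def cls (K : Subgroup G) (d : G × G × G) : (G ⧸ K) × (G ⧸ K) :=
  (QuotientGroup.mk d.1, QuotientGroup.mk d.2.1)

/-- product of evaluations of a list of data. -/
def evList (l : List (G × G × G)) : G := (l.map ev).prod

@[simp] lemma evList_nil : evList ([] : List (G × G × G)) = 1 := rfl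

@[simp] lemma evList_cons (d : G × G × G) (l : List (G × G × G)) :
    evList (d :: l) = ev d * evList l := by simp [evList]

lemma evList_append (l₁ l₂ : List (G × G × G)) :
    evList (l₁ ++ l₂) = evList l₁ * evList l₂ := by
  simp [evList]

/-- The normal closure of `H`. -/
def NN (H : Subgroup G) : Subgroup G := Subgroup.normalClosure (H : Set G)

instance (H : Subgroup G) : (NN H).Normal := Subgroup.normalClosure_normal

lemma NN_le {H T : Subgroup G} (hT : ∀ c h : G, h ∈ H → c * h * c⁻¹ ∈ T) : NN H ≤ T := by
  suffices h : Subgroup.closure (Group.conjugatesOfSet (H : Set G)) ≤ T from h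
  refine (Subgroup.closure_le T).mpr ?_
  intro y hy
  rcases Group.mem_conjugatesOfSet_iff.mp hy with ⟨h, hh, hconj⟩
  rcases isConj_iff.mp hconj with ⟨c, rfl⟩
  exact hT c h hh

lemma mem_NN {H : Subgroup G} {h : G} (hh : h ∈ H) : h ∈ NN H :=
  Subgroup.subset_normalClosure hh

lemma conj_mem_NN {H : Subgroup G} {h : G} (hh : h ∈ H) (c : G) : c * h * c⁻¹ ∈ NN H :=
  (Subgroup.normalClosure_normal).conj_mem h (mem_NN hh) c

lemma comm_mem_NN {H : Subgroup G} {y : G} (hy : y ∈ NN H) (g : G) : ⁅g, y⁆ ∈ NN H := by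
  rw [commutatorElement_def]
  exact (NN H).mul_mem ((Subgroup.normalClosure_normal).conj_mem y hy g) ((NN H).inv_mem hy)

lemma ev_mem_NN {H : Subgroup G} {d : G × G × G} (hd : d.2.2 ∈ H) : ev d ∈ NN H :=
  comm_mem_NN (conj_mem_NN hd d.2.1) d.1

/-- first argument of a commutator matters only modulo elements commuting with `y`. -/
lemma comm_mul_right_eq {g k y : G} (hk : k * y = y * k) : ⁅g * k, y⁆ = ⁅g, y⁆ := by
  have h1 : k * y * k⁻¹ = y := by rw [hk]; group
  calc ⁅g * k, y⁆ = g * (k * y * k⁻¹) * g⁻¹ * y⁻¹ := by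
        rw [commutatorElement_def]; group
    _ = ⁅g, y⁆ := by rw [h1, commutatorElement_def]

lemma conj_eq_of_commute {c k h : G} (hk : k * h = h * k) :
    (c * k) * h * (c * k)⁻¹ = c * h * c⁻¹ := by
  have h1 : k * h * k⁻¹ = h := by rw [hk]; group
  calc (c * k) * h * (c * k)⁻¹ = c * (k * h * k⁻¹) * c⁻¹ := by group
    _ = c * h * c⁻¹ := by rw [h1]

/-- merging identity. -/
lemma comm_mul_merge (g a b : G) : ⁅g, a⁆ * ⁅g, b⁆ = ⁅g, a * b⁆ * ⁅a, ⁅g, b⁆⁻¹⁆ := by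
  simp only [commutatorElement_def]
  group

section WithK

variable {H K : Subgroup G}
variable (hKN : ∀ k ∈ K, ∀ b ∈ NN H, k * b = b * k)

include hKN in
/-- merge two data with the same class. -/
lemma merge {d d' : G × G × G} (hd : d.2.2 ∈ H) (hd' : d'.2.2 ∈ H)
    (hcls : cls K d = cls K d') :
    ∃ u : G × G × G, u.2.2 ∈ H ∧ cls K u = cls K d ∧
      ∃ f ∈ (⁅NN H, NN H⁆ : Subgroup G), ev d * ev d' = ev u * f := by
  obtain ⟨g, c, h⟩ := d
  obtain ⟨g', c', h'⟩ := d'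
  simp only [cls, Prod.mk.injEq] at hcls
  obtain ⟨hg, hc⟩ := hcls
  rw [QuotientGroup.eq] at hg hc
  -- replace c' by c
  have e1 : c' * h' * c'⁻¹ = c * h' * c⁻¹ := by
    have hck : c * (c⁻¹ * c') = c' := by group
    rw [← hck]
    exact conj_eq_of_commute (hKN _ hc h' (mem_NN hd'))
  -- replace g' by g
  have e2 : ev (g', c', h') = ⁅g, c * h' * c⁻¹⁆ := by
    show ⁅g', c' * h' * c'⁻¹⁆ = _
    rw [e1]
    have hgk : g * (g⁻¹ * g') = g' := by group
    rw [← hgk]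
    exact comm_mul_right_eq (hKN _ hg _ (conj_mem_NN hd' c))
  refine ⟨(g, c, h * h'), H.mul_mem hd hd', rfl,
    ⁅c * h * c⁻¹, ⁅g, c * h' * c⁻¹⁆⁻¹⁆, ?_, ?_⟩
  · exact Subgroup.commutator_mem_commutator (conj_mem_NN hd c)
      ((NN H).inv_mem (comm_mem_NN (conj_mem_NN hd' c) g))
  · show ⁅g, c * h * c⁻¹⁆ * ev (g', c', h') = ⁅g, c * (h * h') * c⁻¹⁆ * _
    rw [e2]
    have e3 : c * (h * h') * c⁻¹ = (c * h * c⁻¹) * (c * h' * c⁻¹) := by group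
    rw [e3]
    exact comm_mul_merge g (c * h * c⁻¹) (c * h' * c⁻¹)

lemma swap_comm {a b : G} (ha : a ∈ NN H) (hb : b ∈ NN H) :
    ∃ f ∈ (⁅NN H, NN H⁆ : Subgroup G), a * b = b * a * f := by
  refine ⟨⁅a⁻¹, b⁻¹⁆, Subgroup.commutator_mem_commutator ((NN H).inv_mem ha)
    ((NN H).inv_mem hb), ?_⟩
  rw [commutatorElement_def]
  group

lemma conjF {f : G} (hf : f ∈ (⁅NN H, NN H⁆ : Subgroup G)) (p : G) :
    p⁻¹ * f * p ∈ (⁅NN H, NN H⁆ : Subgroup G) := by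
  have := (Subgroup.commutator_normal (NN H) (NN H)).conj_mem f hf p⁻¹
  simpa using this

include hKN in
lemma insertion (d : G × G × G) (hd : d.2.2 ∈ H) :
    ∀ l : List (G × G × G), (∀ e ∈ l, e.2.2 ∈ H) → (l.map (cls K)).Nodup →
    ∃ l' : List (G × G × G), (∀ e ∈ l', e.2.2 ∈ H) ∧ (l'.map (cls K)).Nodup ∧
      (∀ q ∈ l'.map (cls K), q = cls K d ∨ q ∈ l.map (cls K)) ∧
      ∃ f ∈ (⁅NN H, NN H⁆ : Subgroup G), ev d * evList l = evList l' * f := by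
  intro l
  induction l with
  | nil =>
    intro _ _
    refine ⟨[d], by simpa using hd, by simp, by simp, 1, one_mem _, by simp⟩
  | cons t r ih =>
    intro hgood hnodup
    have ht : t.2.2 ∈ H := hgood t (by simp)
    have hr : ∀ e ∈ r, e.2.2 ∈ H := fun e he => hgood e (by simp [he])
    have hnr : (r.map (cls K)).Nodup := (List.nodup_cons.mp (by simpa using hnodup)).2
    have htr : cls K t ∉ r.map (cls K) := (List.nodup_cons.mp (by simpa using hnodup)).1
    by_cases hc : cls K d = cls K t
    · obtain ⟨u, hu, hclsu, f₀, hf₀, hev⟩ := merge hKN hd ht hc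
      refine ⟨u :: r, ?_, ?_, ?_, (evList r)⁻¹ * f₀ * evList r, conjF hf₀ _, ?_⟩
      · intro e he
        rcases List.mem_cons.mp he with rfl | he
        · exact hu
        · exact hr e he
      · simp only [List.map_cons, List.nodup_cons]
        rw [hclsu, hc]
        exact ⟨htr, hnr⟩
      · intro q hq
        simp only [List.map_cons, List.mem_cons] at hq ⊢
        rcases hq with rfl | hq
        · left; exact hclsu
        · right; right; exact hq
      · simp only [evList_cons]
        rw [← mul_assoc, hev]
        group
    · obtain ⟨f₁, hf₁, hswap⟩ := swap_comm (ev_mem_NN hd) (ev_mem_NN ht)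
      obtain ⟨l₂, hl₂good, hl₂nodup, hl₂sub, f₂, hf₂, hev₂⟩ := ih hr hnr
      refine ⟨t :: l₂, ?_, ?_, ?_, f₂ * ((evList r)⁻¹ * f₁ * evList r),
        Subgroup.mul_mem _ hf₂ (conjF hf₁ _), ?_⟩
      · intro e he
        rcases List.mem_cons.mp he with rfl | he
        · exact ht
        · exact hl₂good e he
      · simp only [List.map_cons, List.nodup_cons]
        refine ⟨?_, hl₂nodup⟩
        intro hmem
        rcases hl₂sub _ hmem with h1 | h1
        · exact hc h1.symm
        · exact htr h1
      · intro q hq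
        simp only [List.map_cons, List.mem_cons] at hq ⊢
        rcases hq with rfl | hq
        · right; left; rfl
        · rcases hl₂sub q hq with h1 | h1
          · left; exact h1
          · right; right; exact h1
      · simp only [evList_cons]
        calc ev d * (ev t * evList r) = (ev d * ev t) * evList r := by rw [mul_assoc]
          _ = (ev t * ev d * f₁) * evList r := by rw [hswap]
          _ = ev t * (ev d * evList r) * ((evList r)⁻¹ * f₁ * evList r) := by group
          _ = ev t * (evList l₂ * f₂) * ((evList r)⁻¹ * f₁ * evList r) := by rw [hev₂]
          _ = ev t * evList l₂ * (f₂ * ((evList r)⁻¹ * f₁ * evList r)) := by group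

include hKN in
lemma normalize :
    ∀ l : List (G × G × G), (∀ e ∈ l, e.2.2 ∈ H) →
    ∃ l' : List (G × G × G), ∃ f : G, (∀ e ∈ l', e.2.2 ∈ H) ∧ (l'.map (cls K)).Nodup ∧
      f ∈ (⁅NN H, NN H⁆ : Subgroup G) ∧ evList l = evList l' * f := by
  intro l
  induction l with
  | nil => exact fun _ => ⟨[], 1, by simp, by simp, one_mem _, by simp⟩
  | cons d r ih =>
    intro hgood
    have hd : d.2.2 ∈ H := hgood d (by simp)
    have hr : ∀ e ∈ r, e.2.2 ∈ H := fun e he => hgood e (by simp [he])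
    obtain ⟨l₁, f₁, hl₁good, hl₁nodup, hf₁, he₁⟩ := ih hr
    obtain ⟨l₂, hl₂good, hl₂nodup, _, f₂, hf₂, he₂⟩ := insertion hKN d hd l₁ hl₁good hl₁nodup
    refine ⟨l₂, f₂ * f₁, hl₂good, hl₂nodup, Subgroup.mul_mem _ hf₂ hf₁, ?_⟩
    calc evList (d :: r) = ev d * evList r := by simp
      _ = ev d * (evList l₁ * f₁) := by rw [he₁]
      _ = (ev d * evList l₁) * f₁ := by rw [mul_assoc]
      _ = (evList l₂ * f₂) * f₁ := by rw [he₂]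
      _ = evList l₂ * (f₂ * f₁) := by rw [mul_assoc]

end WithK

/-- datum for inverse. -/
def invD (d : G × G × G) : G × G × G :=
  ((d.2.1 * d.2.2 * d.2.1⁻¹) * d.1 * (d.2.1 * d.2.2 * d.2.1⁻¹)⁻¹, d.2.1, d.2.2⁻¹)

lemma ev_invD (d : G × G × G) : ev (invD d) = (ev d)⁻¹ := by
  obtain ⟨g, c, h⟩ := d
  show ⁅_ * g * _, c * h⁻¹ * c⁻¹⁆ = ⁅g, c * h * c⁻¹⁆⁻¹
  simp only [commutatorElement_def]
  group

/-- datum for conjugation. -/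
def conjD (t : G) (d : G × G × G) : G × G × G := (t * d.1 * t⁻¹, t * d.2.1, d.2.2)

lemma ev_conjD (t : G) (d : G × G × G) : ev (conjD t d) = t * ev d * t⁻¹ := by
  obtain ⟨g, c, h⟩ := d
  show ⁅t * g * t⁻¹, (t * c) * h * (t * c)⁻¹⁆ = t * ⁅g, c * h * c⁻¹⁆ * t⁻¹
  simp only [commutatorElement_def]
  group

lemma evList_conjD (t : G) : ∀ l : List (G × G × G),
    evList (l.map (conjD t)) = t * evList l * t⁻¹
  | [] => by simp
  | d :: r => by
    rw [List.map_cons, evList_cons, evList_cons, ev_conjD, evList_conjD t r]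
    group

lemma evList_invD : ∀ l : List (G × G × G),
    evList ((l.map invD).reverse) = (evList l)⁻¹
  | [] => by simp
  | d :: r => by
    rw [List.map_cons, List.reverse_cons, evList_append, evList_invD r, evList_cons]
    simp [evList, ev_invD, mul_inv_rev]

variable (H : Subgroup G)

/-- The subgroup of elements representable as products of allowed commutators. -/
def Dsub : Subgroup G where
  carrier := {x | ∃ l : List (G × G × G), (∀ e ∈ l, e.2.2 ∈ H) ∧ evList l = x}
  one_mem' := ⟨[], by simp, by simp⟩
  mul_mem' := by
    rintro a b ⟨l₁, h₁, rfl⟩ ⟨l₂, h₂, rfl⟩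
    refine ⟨l₁ ++ l₂, ?_, by rw [evList_append]⟩
    intro e he
    rcases List.mem_append.mp he with he | he
    · exact h₁ e he
    · exact h₂ e he
  inv_mem' := by
    rintro a ⟨l, hl, rfl⟩
    refine ⟨(l.map invD).reverse, ?_, evList_invD l⟩
    intro e he
    rw [List.mem_reverse] at he
    rcases List.mem_map.mp he with ⟨e', he', rfl⟩
    exact H.inv_mem (hl e' he')

lemma mem_Dsub {x : G} :
    x ∈ Dsub H ↔ ∃ l : List (G × G × G), (∀ e ∈ l, e.2.2 ∈ H) ∧ evList l = x := Iff.rfl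

lemma conj_mem_Dsub {x : G} (hx : x ∈ Dsub H) (t : G) : t * x * t⁻¹ ∈ Dsub H := by
  obtain ⟨l, hl, rfl⟩ := hx
  refine ⟨l.map (conjD t), ?_, evList_conjD t l⟩
  intro e he
  rcases List.mem_map.mp he with ⟨e', he', rfl⟩
  exact hl e' he'

lemma commNN_le_Dsub : (⁅NN H, NN H⁆ : Subgroup G) ≤ Dsub H := by
  rw [Subgroup.commutator_le]
  intro a _ b hb
  have hb' : b ∈ Subgroup.closure (Group.conjugatesOfSet (H : Set G)) := hb
  clear hb
  induction hb' using Subgroup.closure_induction with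
  | mem y hy =>
    rcases Group.mem_conjugatesOfSet_iff.mp hy with ⟨h, hh, hconj⟩
    rcases isConj_iff.mp hconj with ⟨c, rfl⟩
    exact ⟨[(a, c, h)], by simpa using hh, by simp [evList, ev]⟩
  | one => simpa using (Dsub H).one_mem
  | mul x y hx hy px py =>
    have e : ⁅a, x * y⁆ = ⁅a, x⁆ * (x * ⁅a, y⁆ * x⁻¹) := by
      simp only [commutatorElement_def]; group
    rw [e]
    exact (Dsub H).mul_mem px (conj_mem_Dsub H py x)
  | inv x hx px =>
    have e : ⁅a, x⁻¹⁆ = x⁻¹ * ⁅a, x⁆⁻¹ * x⁻¹⁻¹ := by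
      simp only [commutatorElement_def]; group
    rw [e]
    exact conj_mem_Dsub H ((Dsub H).inv_mem px) x⁻¹

/-- commutators only depend on arguments modulo the center. -/
lemma comm_left_central {M : Type*} [Group M] {a z b : M} (hz : ∀ g, g * z = z * g) :
    ⁅a * z, b⁆ = ⁅a, b⁆ :=
  comm_mul_right_eq (hz b).symm

lemma comm_right_central {M : Type*} [Group M] {a b w : M} (hw : ∀ g, g * w = w * g) :
    ⁅a, b * w⁆ = ⁅a, b⁆ := by
  calc ⁅a, b * w⁆ = a * b * (w * a⁻¹) * w⁻¹ * b⁻¹ := by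
        rw [commutatorElement_def]; group
    _ = a * b * (a⁻¹ * w) * w⁻¹ * b⁻¹ := by rw [← hw a⁻¹]
    _ = ⁅a, b⁆ := by rw [commutatorElement_def]; group

lemma comm_eq_of_center {M : Type*} [Group M] {a a' b b' : M}
    (ha : a⁻¹ * a' ∈ Subgroup.center M) (hb : b⁻¹ * b' ∈ Subgroup.center M) :
    ⁅a', b'⁆ = ⁅a, b⁆ := by
  have ea : a * (a⁻¹ * a') = a' := by group
  have eb : b * (b⁻¹ * b') = b' := by group
  rw [← ea, ← eb, comm_left_central (Subgroup.mem_center_iff.mp ha),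
    comm_right_central (Subgroup.mem_center_iff.mp hb)]

end CommBoundAux

open CommBoundAux

/-- If the centralizer `C_G(H)` has finite index in `G`, there exists `N` such that
every element of the commutator subgroup `(G, H)` is a product of at most `N`
commutators of the form `⁅g, c * h * c⁻¹⁆` with `g, c ∈ G`, `h ∈ H`. -/
theorem commutator_subgroup_bounded_products (G : Type*) [Group G] (H : Subgroup G)
    (hfi : (Subgroup.centralizer (H : Set G)).FiniteIndex) :
    ∃ N : ℕ, ∀ x ∈ Subgroup.closure {y : G | ∃ g : G, ∃ h ∈ H, y = ⁅g, h⁆},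
      ∃ l : List G, l.length ≤ N ∧
        (∀ y ∈ l, ∃ g c : G, ∃ h ∈ H, y = ⁅g, c * h * c⁻¹⁆) ∧ l.prod = x := by
  classical
  haveI := hfi
  set K : Subgroup G := (Subgroup.centralizer (H : Set G)).normalCore with hKdef
  haveI hKnormal : K.Normal := by rw [hKdef]; infer_instance
  haveI hKfi : K.FiniteIndex := by rw [hKdef]; exact Subgroup.finiteIndex_normalCore _
  set N : Subgroup G := NN H with hNdef
  -- K centralizes N
  have hKN : ∀ k ∈ K, ∀ b ∈ N, k * b = b * k := by
    intro k hk b hb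
    have hle : N ≤ Subgroup.centralizer {k} := by
      apply NN_le
      intro c h hh
      rw [Subgroup.mem_centralizer_iff]
      intro x hx
      rw [Set.mem_singleton_iff] at hx
      rw [hx]
      -- x = k; show k * (c h c⁻¹) = (c h c⁻¹) * k
      have hk' : c⁻¹ * k * c ∈ K := by
        have := (Subgroup.normalCore_normal _).conj_mem k hk c⁻¹
        simpa using this
      have hcomm : (c⁻¹ * k * c) * h = h * (c⁻¹ * k * c) := by
        have := Subgroup.mem_centralizer_iff.mp (Subgroup.normalCore_le _ hk') h
          (by simpa using hh)
        exact this.symm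
      calc k * (c * h * c⁻¹) = c * ((c⁻¹ * k * c) * h) * c⁻¹ := by group
        _ = c * (h * (c⁻¹ * k * c)) * c⁻¹ := by rw [hcomm]
        _ = (c * h * c⁻¹) * k := by group
    exact Subgroup.mem_centralizer_iff.mp (hle hb) k rfl
  -- the center of N has finite index in N
  haveI hrel : (K.subgroupOf N).FiniteIndex := by
    constructor
    intro h0
    have hdvd : K.relIndex N ∣ K.index := Subgroup.relIndex_dvd_index_of_normal K N
    have : K.relIndex N = 0 := h0
    exact hKfi.index_ne_zero (zero_dvd_iff.mp (this ▸ hdvd))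
  have hZle : K.subgroupOf N ≤ Subgroup.center ↥N := by
    rintro ⟨x, hxN⟩ hx
    rw [Subgroup.mem_center_iff]
    rintro ⟨y, hyN⟩
    have hxK : x ∈ K := Subgroup.mem_subgroupOf.mp hx
    exact Subtype.ext (hKN x hxK y hyN).symm
  haveI : (Subgroup.center ↥N).FiniteIndex := Subgroup.finiteIndex_of_le hZle
  haveI : Finite (↥N ⧸ Subgroup.center ↥N) := Subgroup.finite_quotient_of_finiteIndex
  -- Schur: the commutator subgroup of N is finite
  haveI hcs : Finite (commutatorSet ↥N) := by
    let f : (↥N ⧸ Subgroup.center ↥N) × (↥N ⧸ Subgroup.center ↥N) → ↥N :=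
      fun p => ⁅p.1.out, p.2.out⁆
    have hsub : commutatorSet ↥N ⊆ Set.range f := by
      rintro x ⟨a, b, rfl⟩
      refine ⟨(QuotientGroup.mk a, QuotientGroup.mk b), ?_⟩
      show ⁅(QuotientGroup.mk a : ↥N ⧸ _).out, (QuotientGroup.mk b : ↥N ⧸ _).out⁆ = ⁅a, b⁆
      apply comm_eq_of_center
      · exact QuotientGroup.eq.mp (QuotientGroup.out_eq' (QuotientGroup.mk a)).symm
      · exact QuotientGroup.eq.mp (QuotientGroup.out_eq' (QuotientGroup.mk b)).symm
    exact ((Set.finite_range f).subset hsub).to_subtype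
  haveI hcf : Finite (_root_.commutator ↥N) := inferInstance
  have hFeq : (⁅N, N⁆ : Subgroup G) = Subgroup.map N.subtype (_root_.commutator ↥N) := by
    rw [commutator_def, Subgroup.map_commutator]
    congr 1 <;>
    · rw [← MonoidHom.range_eq_map, Subgroup.range_subtype]
  have hFfin : ((⁅N, N⁆ : Subgroup G) : Set G).Finite := by
    rw [hFeq, Subgroup.coe_map]
    exact (Set.toFinite _).image _
  -- uniform bound on representations of elements of ⁅N,N⁆
  have hrep : ∀ f ∈ (⁅N, N⁆ : Subgroup G),
      ∃ l : List (G × G × G), (∀ e ∈ l, e.2.2 ∈ H) ∧ evList l = f :=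
    fun f hf => commNN_le_Dsub H hf
  choose L hLgood hLev using hrep
  haveI hFfin' : Finite ↥(⁅N, N⁆ : Subgroup G) := hFfin.to_subtype
  obtain ⟨B, hB⟩ : ∃ B : ℕ, ∀ s : ↥(⁅N, N⁆ : Subgroup G), (L s.1 s.2).length ≤ B :=
    Finite.exists_le _
  -- the final bound
  haveI : Finite (G ⧸ K) := Subgroup.finite_quotient_of_finiteIndex
  letI : Fintype ((G ⧸ K) × (G ⧸ K)) := Fintype.ofFinite _
  refine ⟨Fintype.card ((G ⧸ K) × (G ⧸ K)) + B, ?_⟩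
  intro x hx
  -- x is representable
  have hxD : x ∈ Dsub H := by
    refine (Subgroup.closure_le (Dsub H)).mpr ?_ hx
    rintro y ⟨g, h, hh, rfl⟩
    refine ⟨[(g, (1 : G), h)], by simpa using hh, ?_⟩
    simp [evList, ev]
  obtain ⟨l, hlgood, rfl⟩ := hxD
  obtain ⟨l', f, hl'good, hl'nodup, hf, heq⟩ := normalize hKN l hlgood
  have hlen : l'.length ≤ Fintype.card ((G ⧸ K) × (G ⧸ K)) := by
    have := hl'nodup.length_le_card
    simpa using this
  set lf : List (G × G × G) := L f hf with hlf
  have hlfgood : ∀ e ∈ lf, e.2.2 ∈ H := hLgood f hf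
  have hlfev : evList lf = f := hLev f hf
  have hlflen : lf.length ≤ B := hB ⟨f, hf⟩
  refine ⟨(l' ++ lf).map ev, ?_, ?_, ?_⟩
  · rw [List.length_map, List.length_append]
    exact Nat.add_le_add hlen hlflen
  · intro y hy
    rcases List.mem_map.mp hy with ⟨d, hd, rfl⟩
    have hdH : d.2.2 ∈ H := by
      rcases List.mem_append.mp hd with hd | hd
      · exact hl'good d hd
      · exact hlfgood d hd
    exact ⟨d.1, d.2.1, d.2.2, hdH, rfl⟩
  · show evList (l' ++ lf) = evList l
    rw [evList_append, hlfev, heq]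
end
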